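/- For every n ≥ 1, with m = n(n−1)/2, there exists an injective group homomorphism φ : UT(n,ℤ) → UT(m+1,ℤ) such that φ(g) is essentially hyperbolic for every g ≠ 1. -/

import Mathlib

section Matrices

variable {R : Type*} {n : ℕ}

theorem diag_mul_of_triangular [CommRing R] {A B : Matrix (Fin n) (Fin n) R}
    (hA : A.BlockTriangular id) (hB : B.BlockTriangular id) (i : Fin n) :
    (A * B) i i = A i i * B i i := by
  rw [Matrix.mul_apply]
  apply Finset.sum_eq_single i
  · intro k _ hk
    rcases lt_or_gt_of_ne hk with h | h
    · rw [hA (show (id : Fin n → Fin n) k < id i from h), zero_mul]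
    · rw [hB (show (id : Fin n → Fin n) i < id k from h), mul_zero]
  · intro h; exact absurd (Finset.mem_univ i) h

/-- The group `UT(n,R)` of upper triangular `n × n` matrices over `R` with all diagonal
entries equal to `1`, realised as a subgroup of the group of units of the matrix ring. -/
def UT (n : ℕ) (R : Type*) [CommRing R] : Subgroup (Matrix (Fin n) (Fin n) R)ˣ where
  carrier := {A | (∀ i j : Fin n, j < i → (A : Matrix (Fin n) (Fin n) R) i j = 0) ∧
    ∀ i : Fin n, (A : Matrix (Fin n) (Fin n) R) i i = 1}
  one_mem' := by
    refine ⟨fun i j hij => ?_, fun i => ?_⟩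
    · simp [Matrix.one_apply, (ne_of_lt hij).symm]
    · simp
  mul_mem' := by
    rintro A B ⟨hA1, hA2⟩ ⟨hB1, hB2⟩
    have hA : (A : Matrix (Fin n) (Fin n) R).BlockTriangular id := fun i j h => hA1 i j h
    have hB : (B : Matrix (Fin n) (Fin n) R).BlockTriangular id := fun i j h => hB1 i j h
    refine ⟨fun i j hij => ?_, fun i => ?_⟩
    · exact (hA.mul hB) (show (id : Fin n → Fin n) j < id i from hij)
    · rw [Units.val_mul, diag_mul_of_triangular hA hB, hA2, hB2, one_mul]
  inv_mem' := by
    rintro A ⟨hA1, hA2⟩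
    have hA : (A : Matrix (Fin n) (Fin n) R).BlockTriangular id := fun i j h => hA1 i j h
    haveI := A.invertible
    have hAinv : ((A : Matrix (Fin n) (Fin n) R)⁻¹).BlockTriangular id :=
      Matrix.blockTriangular_inv_of_blockTriangular hA
    have hcoe : ((A⁻¹ : (Matrix (Fin n) (Fin n) R)ˣ) : Matrix (Fin n) (Fin n) R)
        = (A : Matrix (Fin n) (Fin n) R)⁻¹ := Matrix.coe_units_inv A
    refine ⟨fun i j hij => ?_, fun i => ?_⟩
    · rw [hcoe]; exact hAinv (show (id : Fin n → Fin n) j < id i from hij)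
    · have h1 : ((A : Matrix (Fin n) (Fin n) R) * (A : Matrix (Fin n) (Fin n) R)⁻¹) i i = 1 := by
        rw [Matrix.mul_inv_of_invertible]; simp
      rw [diag_mul_of_triangular hA hAinv, hA2, one_mul] at h1
      rw [hcoe, h1]

/-- The group `T*(n,R)` of upper triangular `n × n` matrices over a linearly ordered field `R`
with positive diagonal entries, realised as a subgroup of the units of the matrix ring. -/
def Tstar (n : ℕ) (R : Type*) [Field R] [LinearOrder R] [IsStrictOrderedRing R] : Subgroup (Matrix (Fin n) (Fin n) R)ˣ where
  carrier := {A | (∀ i j : Fin n, j < i → (A : Matrix (Fin n) (Fin n) R) i j = 0) ∧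
    ∀ i : Fin n, 0 < (A : Matrix (Fin n) (Fin n) R) i i}
  one_mem' := by
    refine ⟨fun i j hij => ?_, fun i => ?_⟩
    · simp [Matrix.one_apply, (ne_of_lt hij).symm]
    · simp
  mul_mem' := by
    rintro A B ⟨hA1, hA2⟩ ⟨hB1, hB2⟩
    have hA : (A : Matrix (Fin n) (Fin n) R).BlockTriangular id := fun i j h => hA1 i j h
    have hB : (B : Matrix (Fin n) (Fin n) R).BlockTriangular id := fun i j h => hB1 i j h
    refine ⟨fun i j hij => ?_, fun i => ?_⟩
    · exact (hA.mul hB) (show (id : Fin n → Fin n) j < id i from hij)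
    · rw [Units.val_mul, diag_mul_of_triangular hA hB]
      exact mul_pos (hA2 i) (hB2 i)
  inv_mem' := by
    rintro A ⟨hA1, hA2⟩
    have hA : (A : Matrix (Fin n) (Fin n) R).BlockTriangular id := fun i j h => hA1 i j h
    haveI := A.invertible
    have hAinv : ((A : Matrix (Fin n) (Fin n) R)⁻¹).BlockTriangular id :=
      Matrix.blockTriangular_inv_of_blockTriangular hA
    have hcoe : ((A⁻¹ : (Matrix (Fin n) (Fin n) R)ˣ) : Matrix (Fin n) (Fin n) R)
        = (A : Matrix (Fin n) (Fin n) R)⁻¹ := Matrix.coe_units_inv A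
    refine ⟨fun i j hij => ?_, fun i => ?_⟩
    · rw [hcoe]; exact hAinv (show (id : Fin n → Fin n) j < id i from hij)
    · have h1 : ((A : Matrix (Fin n) (Fin n) R) * (A : Matrix (Fin n) (Fin n) R)⁻¹) i i = 1 := by
        rw [Matrix.mul_inv_of_invertible]; simp
      rw [diag_mul_of_triangular hA hAinv] at h1
      rw [hcoe]
      rcases lt_trichotomy ((A : Matrix (Fin n) (Fin n) R)⁻¹ i i) 0 with h | h | h
      · exact absurd h1 (by nlinarith [hA2 i])
      · rw [h, mul_zero] at h1; exact absurd h1 zero_ne_one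
      · exact h

/-- The last index of `Fin N` (any element of `Fin N` witnesses `0 < N`). -/
def lastOf {N : ℕ} (r : Fin N) : Fin N := ⟨N - 1, Nat.sub_lt r.pos Nat.one_pos⟩

/-- A square matrix `g` (upper triangular, with positive diagonal and bottom-right entry `1`)
is *essentially hyperbolic* if `g ≠ 1` and there is a row index `r` which is not the last row
such that `(g-1)_{r,N} ≠ 0` (where `N` is the last column) and every nonzero entry of `g - 1`
lies either in a row strictly above `r`, or at position `(r, N)`. -/
def EssentiallyHyperbolic {N : ℕ} {R : Type*} [CommRing R]
    (g : Matrix (Fin N) (Fin N) R) : Prop :=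
  g ≠ 1 ∧ ∃ r : Fin N, (r : ℕ) + 1 < N ∧ (g - 1) r (lastOf r) ≠ 0 ∧
    ∀ i j : Fin N, (g - 1) i j ≠ 0 → i < r ∨ (i = r ∧ j = lastOf r)

end Matrices

/-- The (multiplicative) group structure on `AddAut A` that the older Mathlib provided:
`f * g = g.trans f`, `1 = refl`, `f⁻¹ = f.symm`. -/
instance addAutMulGroup (A : Type*) [Add A] : Group (AddAut A) where
  mul g h := AddEquiv.trans h g
  one := AddEquiv.refl _
  inv := AddEquiv.symm
  mul_assoc _ _ _ := rfl
  one_mul _ := rfl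
  mul_one _ := rfl
  inv_mul_cancel := AddEquiv.self_trans_symm

/-- The group of order-preserving additive automorphisms of a linearly ordered abelian
group `Λ`, as a subgroup of `AddAut Λ`. -/
def orderAddAut (Λ : Type*) [AddCommGroup Λ] [LinearOrder Λ] [IsOrderedAddMonoid Λ] : Subgroup (AddAut Λ) where
  carrier := {f | StrictMono f}
  one_mem' := strictMono_id
  mul_mem' := by
    intro f g hf hg a b hab
    exact hf (hg hab)
  inv_mem' := by
    intro f hf a b hab
    exact hf.lt_iff_lt.1 (by simpa [show ∀ x, f (f⁻¹ x) = x from f.apply_symm_apply] using hab)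

/-!
Right multiplication `X ↦ X * h` by an upper unitriangular `h` is an affine map in the
coordinates `X i j` (`i < j`) of upper unitriangular matrices `X`, so it is given by a matrix of
size `n(n-1)/2 + 1` whose extra coordinate is the constant `1`; sending `g` to the matrix of
`X ↦ X * g⁻¹` is a homomorphism. Ordering the coordinates by decreasing column, then increasing
row, makes these matrices unitriangular. For `g ≠ 1`, take the lowest nonzero off-diagonal entry
of `g⁻¹` in the leftmost column containing one: all later rows of the image of `g` minus `1`
vanish, and in its own row only the constant column is nonzero. In particular the image of `g`
is not `1`, which gives injectivity.
-/

open Matrix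

namespace Matrix

variable {ι κ R : Type*}

def IsUpperUnitriangular [LT ι] [Zero R] [One R] (A : Matrix ι ι R) : Prop :=
  (∀ i j, j < i → A i j = 0) ∧ ∀ i, A i i = 1

namespace IsUpperUnitriangular

theorem submatrix [Preorder ι] [Preorder κ] [Zero R] [One R] {A : Matrix ι ι R}
    (hA : A.IsUpperUnitriangular) {f : κ → ι} (hf : StrictMono f) :
    (A.submatrix f f).IsUpperUnitriangular :=
  ⟨fun _ _ hji => hA.1 _ _ (hf hji), fun i => hA.2 (f i)⟩

theorem eq_one [LinearOrder ι] [Zero R] [One R] {A : Matrix ι ι R}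
    (hA : A.IsUpperUnitriangular) (hup : ∀ i j, i < j → A i j = 0) : A = 1 := by
  ext i j
  rcases lt_trichotomy i j with hij | rfl | hij
  · rw [hup i j hij, one_apply_ne hij.ne]
  · rw [hA.2, one_apply_eq]
  · rw [hA.1 i j hij, one_apply_ne hij.ne']

variable [LinearOrder ι] [LocallyFiniteOrderTop ι] [Fintype ι] [CommRing R]
  {a b : Matrix ι ι R}

theorem mul_apply_eq_add_sum_Ioi (hb : b.IsUpperUnitriangular) (i j : ι) :
    (b * a) i j = a i j + ∑ k ∈ Finset.Ioi i, b i k * a k j := by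
  rw [mul_apply, ← Finset.sum_subset (Finset.subset_univ (Finset.Ici i)), ← Finset.Ioi_insert,
    Finset.sum_insert Finset.notMem_Ioi_self, hb.2, one_mul]
  intro k _ hk
  rw [hb.1 i k (lt_of_not_ge (by simpa using hk)), zero_mul]

theorem mul_apply_eq_sum_Ioi (hb : b.IsUpperUnitriangular) {i l : ι} (hil : i < l) (j : ι) :
    (b * a) l j = ∑ k ∈ Finset.Ioi i, b l k * a k j := by
  rw [mul_apply, ← Finset.sum_subset (Finset.subset_univ (Finset.Ioi i))]
  intro k _ hk
  rw [hb.1 l k (lt_of_le_of_lt (not_lt.1 (by simpa using hk)) hil), zero_mul]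

end IsUpperUnitriangular

def IsEssentiallyHyperbolicAt [LinearOrder ι] [Ring R] (A : Matrix (WithTop ι) (WithTop ι) R)
    (r : ι) : Prop :=
  (A - 1) r ⊤ ≠ 0 ∧ ∀ p q, (A - 1) p q ≠ 0 → p < r ∨ p = r ∧ q = ⊤

end Matrix

theorem le_lastOf {N : ℕ} (r x : Fin N) : x ≤ lastOf r := by
  rw [Fin.le_def]
  exact Nat.le_sub_one_of_lt x.isLt

theorem Matrix.IsEssentiallyHyperbolicAt.essentiallyHyperbolic_submatrix {ι R : Type*}
    [LinearOrder ι] [CommRing R] {A : Matrix (WithTop ι) (WithTop ι) R} {r : ι}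
    (hA : A.IsEssentiallyHyperbolicAt r) {N : ℕ} (e : Fin N ≃o WithTop ι) :
    EssentiallyHyperbolic (A.submatrix e e) := by
  set r' := e.symm r
  have he_last : e (lastOf r') = ⊤ := top_le_iff.1 <| by
    simpa using e.monotone (le_lastOf r' (e.symm ⊤))
  have hsub : A.submatrix e e - 1 = (A - 1).submatrix e e := by
    ext p q
    simp [one_apply]
  have hentry : (A.submatrix e e - 1) r' (lastOf r') ≠ 0 := by
    rw [hsub, submatrix_apply, he_last, OrderIso.apply_symm_apply]
    exact hA.1
  refine ⟨fun h1 => hentry (by rw [h1, sub_self]; rfl), r', ?_, hentry, fun p q hpq => ?_⟩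
  · have hr' : r' < lastOf r' := by
      rw [← e.lt_iff_lt, he_last, OrderIso.apply_symm_apply]
      exact WithTop.coe_lt_top r
    rw [Fin.lt_def] at hr'
    simp only [lastOf] at hr'
    omega
  · rw [hsub, submatrix_apply] at hpq
    rcases hA.2 _ _ hpq with hp | ⟨hp, hq⟩
    · exact Or.inl (e.lt_symm_apply.2 hp)
    · exact Or.inr ⟨e.eq_symm_apply.2 hp, e.injective (hq.trans he_last.symm)⟩

theorem Fintype.sum_withTop {α M : Type*} [Fintype α] [AddCommMonoid M] (f : WithTop α → M) :
    ∑ x, f x = f ⊤ + ∑ a : α, f a :=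
  Fintype.sum_option f

@[ext]
structure AboveDiag (n : ℕ) where
  i : Fin n
  j : Fin n
  lt : i < j

namespace AboveDiag

variable {n : ℕ}

def equivSigma (n : ℕ) : AboveDiag n ≃ Σ j : Fin n, Fin j where
  toFun a := ⟨a.j, ⟨a.i, a.lt⟩⟩
  invFun x := ⟨⟨x.2, x.2.isLt.trans x.1.isLt⟩, x.1, x.2.isLt⟩
  left_inv _ := rfl
  right_inv _ := rfl

instance : Fintype (AboveDiag n) := Fintype.ofEquiv _ (equivSigma n).symm

theorem card : Fintype.card (AboveDiag n) = n * (n - 1) / 2 := by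
  rw [Fintype.card_congr (equivSigma n), Fintype.card_sigma]
  simp only [Fintype.card_fin]
  rw [Fin.sum_univ_eq_sum_range (fun j => j) n, Finset.sum_range_id]

/-- Positions are ordered by decreasing column, then by increasing row: this is the order in
which `affineRightMulMatrix h` is upper unitriangular. -/
def key (a : AboveDiag n) : (Fin n)ᵒᵈ ×ₗ Fin n := toLex (OrderDual.toDual a.j, a.i)

theorem key_injective : Function.Injective (key (n := n)) := fun a b h => by
  simp only [key, toLex_inj, Prod.mk.injEq, OrderDual.toDual_inj] at h
  exact AboveDiag.ext h.2 h.1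

instance : LinearOrder (AboveDiag n) := LinearOrder.lift' key key_injective

theorem lt_iff {a b : AboveDiag n} : a < b ↔ b.j < a.j ∨ a.j = b.j ∧ a.i < b.i :=
  Prod.Lex.toLex_lt_toLex

theorem sum_ite_i_eq_sum_Ioi {M : Type*} [AddCommMonoid M] (i : Fin n) (f : Fin n → M) :
    ∑ a : AboveDiag n, (if a.i = i then f a.j else 0) = ∑ k ∈ Finset.Ioi i, f k := by
  rw [← Finset.sum_filter]
  refine Finset.sum_bij' (fun a _ => a.j) (fun k hk => ⟨i, k, Finset.mem_Ioi.1 hk⟩)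
    (fun a ha => ?_) (fun k _ => by simp) (fun a ha => ?_) (fun _ _ => rfl) (fun _ _ => rfl)
  · rw [(Finset.mem_filter.1 ha).2.symm]
    exact Finset.mem_Ioi.2 a.lt
  · exact AboveDiag.ext (Finset.mem_filter.1 ha).2.symm rfl

end AboveDiag

section AffineRightMul

variable {n : ℕ} {R : Type*} [CommRing R]

/-- The matrix of `X ↦ X * h` on upper unitriangular `X`, in the affine coordinates `X a.i a.j`
(`a : AboveDiag n`) completed by the constant coordinate `⊤`. -/
def affineRightMulMatrix (h : Matrix (Fin n) (Fin n) R) :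
    Matrix (WithTop (AboveDiag n)) (WithTop (AboveDiag n)) R
  | ⊤, ⊤ => 1
  | ⊤, (_ : AboveDiag n) => 0
  | (a : AboveDiag n), ⊤ => h a.i a.j
  | (a : AboveDiag n), (b : AboveDiag n) => if b.i = a.i then h b.j a.j else 0

variable {h : Matrix (Fin n) (Fin n) R}

@[simp] theorem affineRightMulMatrix_top_top : affineRightMulMatrix h ⊤ ⊤ = 1 := rfl

@[simp] theorem affineRightMulMatrix_top_coe (b : AboveDiag n) :
    affineRightMulMatrix h ⊤ b = 0 := rfl

@[simp] theorem affineRightMulMatrix_coe_top (a : AboveDiag n) :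
    affineRightMulMatrix h a ⊤ = h a.i a.j := rfl

@[simp] theorem affineRightMulMatrix_coe_coe (a b : AboveDiag n) :
    affineRightMulMatrix h a b = if b.i = a.i then h b.j a.j else 0 := rfl

theorem affineRightMulMatrix_one : affineRightMulMatrix (1 : Matrix (Fin n) (Fin n) R) = 1 := by
  ext p q
  induction p using WithTop.recTopCoe with
  | top => induction q using WithTop.recTopCoe <;> simp
  | coe a =>
    induction q using WithTop.recTopCoe with
    | top => simp [one_apply_ne a.lt.ne]
    | coe b =>
      by_cases hab : a = b
      · subst hab
        simp
      · have hj : b.i = a.i → b.j ≠ a.j := fun hi hj => hab (AboveDiag.ext hi hj).symm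
        simp only [affineRightMulMatrix_coe_coe, one_apply, WithTop.coe_inj]
        split_ifs <;> simp_all

theorem isUpperUnitriangular_affineRightMulMatrix (hh : h.IsUpperUnitriangular) :
    (affineRightMulMatrix h).IsUpperUnitriangular := by
  refine ⟨fun p q hqp => ?_, fun p => ?_⟩
  · induction p using WithTop.recTopCoe with
    | top => induction q using WithTop.recTopCoe with
      | top => exact absurd hqp (lt_irrefl _)
      | coe b => rfl
    | coe a => induction q using WithTop.recTopCoe with
      | top => exact absurd hqp not_top_lt
      | coe b =>
        rw [affineRightMulMatrix_coe_coe]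
        split_ifs with hi
        · rcases AboveDiag.lt_iff.1 (WithTop.coe_lt_coe.1 hqp) with hj | ⟨-, hi'⟩
          · exact hh.1 _ _ hj
          · exact absurd hi hi'.ne
        · rfl
  · induction p using WithTop.recTopCoe with
    | top => rfl
    | coe a => simp [hh.2]

theorem affineRightMulMatrix_mul {a b : Matrix (Fin n) (Fin n) R}
    (hb : b.IsUpperUnitriangular) :
    affineRightMulMatrix (b * a) = affineRightMulMatrix a * affineRightMulMatrix b := by
  ext p q
  rw [mul_apply, Fintype.sum_withTop]
  induction p using WithTop.recTopCoe with
  | top => induction q using WithTop.recTopCoe <;> simp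
  | coe c =>
    induction q using WithTop.recTopCoe with
    | top =>
      have hsum (e : AboveDiag n) : (if e.i = c.i then a e.j c.j else 0) * b e.i e.j
          = if e.i = c.i then b c.i e.j * a e.j c.j else 0 := by
        split_ifs with he <;> simp_all [mul_comm]
      simp only [affineRightMulMatrix_coe_top, affineRightMulMatrix_coe_coe, mul_one,
        affineRightMulMatrix_top_top]
      rw [Finset.sum_congr rfl fun e _ => hsum e,
        AboveDiag.sum_ite_i_eq_sum_Ioi c.i fun k => b c.i k * a k c.j,
        hb.mul_apply_eq_add_sum_Ioi]
    | coe d =>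
      have hsum (e : AboveDiag n) :
          (if e.i = c.i then a e.j c.j else 0) * (if d.i = e.i then b d.j e.j else 0)
          = if e.i = c.i then (if d.i = c.i then b d.j e.j * a e.j c.j else 0) else 0 := by
        split_ifs with he <;> simp_all [mul_comm]
      simp only [affineRightMulMatrix_coe_top, affineRightMulMatrix_coe_coe,
        affineRightMulMatrix_top_coe, mul_zero, zero_add]
      rw [Finset.sum_congr rfl fun e _ => hsum e, AboveDiag.sum_ite_i_eq_sum_Ioi c.i
        fun k => if d.i = c.i then b d.j k * a k c.j else 0]
      split_ifs with hdc
      · exact hb.mul_apply_eq_sum_Ioi (hdc ▸ d.lt) c.j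
      · exact Finset.sum_const_zero.symm

theorem Matrix.IsUpperUnitriangular.exists_ne_zero_of_affineRightMulMatrix_sub_one_ne_zero
    (hh : h.IsUpperUnitriangular) {p q : WithTop (AboveDiag n)}
    (hpq : (affineRightMulMatrix h - 1) p q ≠ 0) :
    ∃ c : AboveDiag n, h c.i c.j ≠ 0 ∧ (p < c ∨ p = c ∧ q = ⊤) := by
  induction p using WithTop.recTopCoe with
  | top => induction q using WithTop.recTopCoe <;> simp at hpq
  | coe a =>
    induction q using WithTop.recTopCoe with
    | top => exact ⟨a, by simpa using hpq, Or.inr ⟨rfl, rfl⟩⟩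
    | coe b =>
      by_cases hab : a = b
      · subst hab
        simp [hh.2] at hpq
      simp only [sub_apply, affineRightMulMatrix_coe_coe, one_apply, WithTop.coe_inj, hab,
        if_false, sub_zero, ne_eq, ite_eq_right_iff, Classical.not_imp] at hpq
      obtain ⟨hi, hne⟩ := hpq
      have hj : b.j < a.j := lt_of_le_of_ne (not_lt.1 fun hlt => hne (hh.1 _ _ hlt))
        fun hj => hab (AboveDiag.ext hi.symm hj.symm)
      refine ⟨⟨b.j, a.j, hj⟩, hne, Or.inl (WithTop.coe_lt_coe.2 ?_)⟩
      exact AboveDiag.lt_iff.2 (Or.inr ⟨rfl, hi ▸ b.lt⟩)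

/-- The witness is the maximal position of a nonzero entry of `h - 1`, that is, the lowest
nonzero entry in the leftmost nonzero column. -/
theorem Matrix.IsUpperUnitriangular.exists_isEssentiallyHyperbolicAt_affineRightMulMatrix
    (hh : h.IsUpperUnitriangular) (h1 : h ≠ 1) :
    ∃ r, (affineRightMulMatrix h).IsEssentiallyHyperbolicAt r := by
  classical
  set S := Finset.univ.filter fun a : AboveDiag n => h a.i a.j ≠ 0
  have hS : S.Nonempty := by
    by_contra hS
    refine h1 (hh.eq_one fun i j hij => ?_)
    by_contra hne
    exact hS ⟨⟨i, j, hij⟩, Finset.mem_filter.2 ⟨Finset.mem_univ _, hne⟩⟩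
  have hr : S.max' hS ∈ S := S.max'_mem hS
  refine ⟨S.max' hS, by simpa using (Finset.mem_filter.1 hr).2, fun p q hpq => ?_⟩
  obtain ⟨c, hc, hpc⟩ := hh.exists_ne_zero_of_affineRightMulMatrix_sub_one_ne_zero hpq
  have hcr : (c : WithTop (AboveDiag n)) ≤ S.max' hS :=
    WithTop.coe_le_coe.2 (S.le_max' c (Finset.mem_filter.2 ⟨Finset.mem_univ _, hc⟩))
  rcases hpc with hpc | ⟨rfl, rfl⟩
  · exact Or.inl (hpc.trans_le hcr)
  · rcases hcr.lt_or_eq with hcr | hcr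
    · exact Or.inl hcr
    · exact Or.inr ⟨hcr, rfl⟩

end AffineRightMul

namespace UT

variable (n : ℕ) (R : Type*) [CommRing R]

def toMatrix : UT n R →* Matrix (Fin n) (Fin n) R :=
  (Units.coeHom _).comp (UT n R).subtype

variable {n R}

theorem toMatrix_injective : Function.Injective (toMatrix n R) :=
  fun _ _ h => Subtype.ext (Units.ext h)

theorem isUpperUnitriangular_toMatrix (g : UT n R) : (toMatrix n R g).IsUpperUnitriangular :=
  g.2

variable (n R)

def affineMatrixHom : UT n R →* Matrix (WithTop (AboveDiag n)) (WithTop (AboveDiag n)) R where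
  toFun g := affineRightMulMatrix (toMatrix n R g⁻¹)
  map_one' := by rw [inv_one, map_one, affineRightMulMatrix_one]
  map_mul' g g' := by
    rw [_root_.mul_inv_rev, map_mul, affineRightMulMatrix_mul (isUpperUnitriangular_toMatrix _)]

def orderIsoFin : Fin (n * (n - 1) / 2 + 1) ≃o WithTop (AboveDiag n) :=
  monoEquivOfFin _ <| (Fintype.card_option (α := AboveDiag n)).trans (by rw [AboveDiag.card])

def affineEmbedding : UT n R →* UT (n * (n - 1) / 2 + 1) R :=
  MonoidHom.codRestrict ((Matrix.reindexAlgEquiv R R (orderIsoFin n).symm.toEquiv).toRingEquiv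
      |>.toMonoidHom.comp (affineMatrixHom n R)).toHomUnits _ fun g =>
    (isUpperUnitriangular_affineRightMulMatrix (isUpperUnitriangular_toMatrix g⁻¹)).submatrix
      (orderIsoFin n).strictMono

variable {n R}

theorem toMatrix_affineEmbedding (g : UT n R) :
    toMatrix _ R (affineEmbedding n R g) =
      (affineRightMulMatrix (toMatrix n R g⁻¹)).submatrix (orderIsoFin n) (orderIsoFin n) :=
  rfl

theorem essentiallyHyperbolic_affineEmbedding {g : UT n R} (hg : g ≠ 1) :
    EssentiallyHyperbolic (toMatrix _ R (affineEmbedding n R g)) := by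
  have h1 : toMatrix n R g⁻¹ ≠ 1 := fun h =>
    hg (inv_eq_one.1 (toMatrix_injective (h.trans (map_one _).symm)))
  obtain ⟨r, hr⟩ :=
    (isUpperUnitriangular_toMatrix g⁻¹).exists_isEssentiallyHyperbolicAt_affineRightMulMatrix h1
  rw [toMatrix_affineEmbedding]
  exact hr.essentiallyHyperbolic_submatrix _

theorem affineEmbedding_injective : Function.Injective (affineEmbedding n R) :=
  (injective_iff_map_eq_one _).2 fun g hg => by
    by_contra hne
    exact (essentiallyHyperbolic_affineEmbedding hne).1 (by rw [hg]; rfl)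

end UT

theorem UT_int_embeds_essentiallyHyperbolically_general (n : ℕ) :
    ∃ φ : UT n ℤ →* UT (n * (n - 1) / 2 + 1) ℤ,
      Function.Injective φ ∧
      ∀ g : UT n ℤ, g ≠ 1 →
        EssentiallyHyperbolic
          (((φ g : UT (n * (n - 1) / 2 + 1) ℤ) :
              (Matrix (Fin (n * (n - 1) / 2 + 1)) (Fin (n * (n - 1) / 2 + 1)) ℤ)ˣ) :
            Matrix (Fin (n * (n - 1) / 2 + 1)) (Fin (n * (n - 1) / 2 + 1)) ℤ) :=
  ⟨UT.affineEmbedding n ℤ, UT.affineEmbedding_injective,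
    fun _ hg => UT.essentiallyHyperbolic_affineEmbedding hg⟩

/-- For `n ≥ 1` and `m = n(n-1)/2` there is an injective group homomorphism
`φ : UT(n,ℤ) → UT(m+1,ℤ)` such that `φ g` is essentially hyperbolic for every `g ≠ 1`. -/
theorem UT_int_embeds_essentiallyHyperbolically (n : ℕ) (hn : 1 ≤ n) :
    ∃ φ : UT n ℤ →* UT (n * (n - 1) / 2 + 1) ℤ,
      Function.Injective φ ∧
      ∀ g : UT n ℤ, g ≠ 1 →
        EssentiallyHyperbolic
          (((φ g : UT (n * (n - 1) / 2 + 1) ℤ) :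
              (Matrix (Fin (n * (n - 1) / 2 + 1)) (Fin (n * (n - 1) / 2 + 1)) ℤ)ˣ) :
            Matrix (Fin (n * (n - 1) / 2 + 1)) (Fin (n * (n - 1) / 2 + 1)) ℤ) :=
  UT_int_embeds_essentiallyHyperbolically_general n
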